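/- arXiv:math/0702581 — 2 statements merged into one kernel-verified Lean document; each statement's English description precedes it below -/
import Mathlib

section
/- Let x = (1,1), φ(z) = (z,z) the diagonal geodesic in Δ², and π_g(z₁,z₂) = (a z₁ + (1−a) z₂, a z₁ + (1−a) z₂) a linear holomorphic retraction onto the image of φ (a ∈ ℂ). Let γ(t) = (γ₁(t), γ₂(t)) be a curve in Δ² converging to (1,1) such that γ₁(t) → 1 non-tangentially (γ is g-restricted). Then K_{Δ²}(γ(t), π_g(γ(t))) → 0 as t → 1⁻ if and only if (1 − γ₂(t))/(1 − γ₁(t)) → 1 as t → 1⁻. -/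
open Filter Topology
open scoped ENNReal

noncomputable section

/-- The open unit disc in `ℂ`. -/
def disc : Set ℂ := {z : ℂ | ‖z‖ < 1}

/-- The bidisc `Δ²`. -/
def bidisc : Set (ℂ × ℂ) := disc ×ˢ disc

/-- The Poincaré distance on the unit disc (formula-wise on `ℂ`). -/
def pd (z w : ℂ) : ℝ :=
  (1/2) * Real.log ((1 + ‖(z - w) / (1 - (starRingEnd ℂ) z * w)‖) /
    (1 - ‖(z - w) / (1 - (starRingEnd ℂ) z * w)‖))

/-- The Kobayashi distance of the bidisc: max of Poincaré distances. -/
def kd (z w : ℂ × ℂ) : ℝ := max (pd z.1 w.1) (pd z.2 w.2)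

/-- The Stolz region of vertex `τ` and amplitude `M`. -/
def stolz (τ : ℂ) (M : ℝ) : Set ℂ :=
  {z ∈ disc | ‖τ - z‖ < M * (1 - ‖z‖)}

/-- `g` has non-tangential limit `L` at `τ ∈ ∂Δ`. -/
def NTlim (g : ℂ → ℂ) (τ L : ℂ) : Prop :=
  ∀ M > (1:ℝ), Tendsto g (nhdsWithin τ (stolz τ M)) (nhds L)

/-- The boundary dilation coefficient of `g` at `τ`, as an extended real. -/
def lamE (g : ℂ → ℂ) (τ : ℂ) : EReal :=
  Filter.liminf (fun z => (((1 - ‖g z‖) / (1 - ‖z‖) : ℝ) : EReal))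
    (nhdsWithin τ disc)

/-- Open horocycle of center `τ ∈ ∂Δ` and radius `R`. -/
def horo (τ : ℂ) (R : ℝ) : Set ℂ :=
  {z ∈ disc | ‖τ - z‖ ^ 2 / (1 - ‖z‖ ^ 2) < R}

/-- Closed horocycle of center `τ ∈ ∂Δ` and radius `R`. -/
def horoC (τ : ℂ) (R : ℝ) : Set ℂ :=
  {z ∈ disc | ‖τ - z‖ ^ 2 / (1 - ‖z‖ ^ 2) ≤ R}

/-- The Busemann sublevel set of radius `R` associated to the geodesic `φ`. -/
def busemannSub (φ : ℂ → ℂ × ℂ) (R : ℝ) : Set (ℂ × ℂ) :=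
  {x ∈ bidisc | ∃ L : ℝ,
    Tendsto (fun r : ℝ => kd x (φ (r : ℂ)) - kd (φ 0) (φ (r : ℂ)))
      (nhdsWithin 1 (Set.Iio 1)) (nhds L) ∧
    L ≤ (1/2) * Real.log R}

/-- Small horosphere of center `y ∈ ∂Δ²` and radius `R`. -/
def smallHoro (y : ℂ × ℂ) (R : ℝ) : Set (ℂ × ℂ) :=
  {z ∈ bidisc |
    Filter.limsup (fun w => ((kd z w - kd 0 w : ℝ) : EReal)) (nhdsWithin y bidisc) <
      (((1/2) * Real.log R : ℝ) : EReal)}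

/-- Big horosphere of center `y ∈ ∂Δ²` and radius `R`. -/
def bigHoro (y : ℂ × ℂ) (R : ℝ) : Set (ℂ × ℂ) :=
  {z ∈ bidisc |
    Filter.liminf (fun w => ((kd z w - kd 0 w : ℝ) : EReal)) (nhdsWithin y bidisc) <
      (((1/2) * Real.log R : ℝ) : EReal)}

/-- The g-Koranyi region of amplitude `M` associated to the geodesic `φ`. -/
def koranyi (φ : ℂ → ℂ × ℂ) (M : ℝ) : Set (ℂ × ℂ) :=
  {z ∈ bidisc | ∃ L : ℝ,
    Tendsto (fun r : ℝ => kd z (φ (r : ℂ)) - kd (φ 0) (φ (r : ℂ)))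
      (nhdsWithin 1 (Set.Iio 1)) (nhds L) ∧
    L + kd (φ 0) z < Real.log M}

/-- A continuous curve in `Δ²` converging to `x` as `t → 1⁻`. -/
def xcurve (σ : ℝ → ℂ × ℂ) (x : ℂ × ℂ) : Prop :=
  ContinuousOn σ (Set.Ico 0 1) ∧ (∀ t ∈ Set.Ico (0:ℝ) 1, σ t ∈ bidisc) ∧
    Tendsto σ (nhdsWithin 1 (Set.Iio 1)) (nhds x)

/-- A curve in `Δ` converging non-tangentially to `τ ∈ ∂Δ`. -/
def NTcurve (w : ℝ → ℂ) (τ : ℂ) : Prop :=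
  Tendsto w (nhdsWithin 1 (Set.Iio 1)) (nhds τ) ∧
    ∃ M : ℝ, ∀ᶠ t in nhdsWithin (1:ℝ) (Set.Iio 1),
      ‖τ - w t‖ ≤ M * (1 - ‖w t‖)

/-- Horocycle with possibly infinite coefficient / interior center:
`E_Δ(τ, lam·R)`, with the convention that it is all of `Δ` when `τ` is interior
or the coefficient is infinite. -/
def horoE (τ : ℂ) (lam : ℝ≥0∞) (R : ℝ) : Set ℂ :=
  if ‖τ‖ = 1 ∧ lam ≠ ⊤ then
    {z ∈ disc | ‖τ - z‖ ^ 2 / (1 - ‖z‖ ^ 2) < lam.toReal * R}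
  else disc

/-- `(1/2) log` of the `φ_g`-boundary dilation coefficient of `f` at `x` (as an
extended real, via `limsup` along the radius). -/
def lamPhi (f : ℂ × ℂ → ℂ) (g : ℂ → ℂ) (x1 : ℂ) : EReal :=
  Filter.limsup
    (fun t : ℝ =>
      ((kd 0 ((t : ℂ) * x1, g ((t : ℂ) * x1)) -
          pd 0 (f ((t : ℂ) * x1, g ((t : ℂ) * x1))) : ℝ) : EReal))
    (nhdsWithin 1 (Set.Iio 1))

/-- `(1/2) log` of Abate's boundary dilation coefficient of `f` at `x`. -/
def alphaF (f : ℂ × ℂ → ℂ) (x : ℂ × ℂ) : EReal :=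
  Filter.liminf (fun w => ((kd 0 w - pd 0 (f w) : ℝ) : EReal)) (nhdsWithin x bidisc)

/-- `τ ∈ ∂Δ²` is a generalized Wolff point of `f`: some complex geodesic through
`τ` has all its Busemann sublevel sets `f`-invariant. -/
def GenWolff (f : ℂ × ℂ → ℂ × ℂ) (τ : ℂ × ℂ) : Prop :=
  τ ∈ frontier bidisc ∧
  ∃ φ : ℂ → ℂ × ℂ, Set.MapsTo φ disc bidisc ∧
    (∀ z ∈ disc, ∀ w ∈ disc, kd (φ z) (φ w) = pd z w) ∧
    τ ∈ closure (φ '' disc) ∧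
    ∀ R > (0:ℝ), Set.MapsTo f (busemannSub φ R) (busemannSub φ R)

end

/-!
Since `π_g` maps `Δ²` into `Δ`, testing it at `r • (conj a / ‖a‖, conj (1 - a) / ‖1 - a‖)` gives
`‖a‖ + ‖1 - a‖ ≤ 1`, so `a` is real and lies in `[0, 1]`: the point `p = a z₁ + (1 - a) z₂` lies on
the segment `[z₁, z₂]`. Both pseudo-hyperbolic distances `ρ(z₁, p)`, `ρ(z₂, p)` are then at most
`‖z₁ - z₂‖ / (1 - ‖z₁‖)`, and conversely `‖z₁ - z₂‖ (1 - 2s) ≤ 2s (1 - ‖z₁‖)` with `s` their sum.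
Hence `K(γ, π_g γ) → 0` iff `‖γ₁ - γ₂‖ / (1 - ‖γ₁‖) → 0`. Finally
`‖(1 - γ₂) / (1 - γ₁) - 1‖ = ‖γ₁ - γ₂‖ / ‖1 - γ₁‖`, and non-tangential approach makes `‖1 - γ₁‖`
comparable with `1 - ‖γ₁‖`.
-/

open ComplexConjugate

noncomputable def pseudoHyperbolicDist (z w : ℂ) : ℝ := ‖(z - w) / (1 - conj z * w)‖

lemma pd_eq_half_log (z w : ℂ) :
    pd z w = 1 / 2 * Real.log ((1 + pseudoHyperbolicDist z w) / (1 - pseudoHyperbolicDist z w)) :=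
  rfl

lemma pseudoHyperbolicDist_nonneg (z w : ℂ) : 0 ≤ pseudoHyperbolicDist z w := norm_nonneg _

lemma norm_one_sub_conj_mul_comm (z w : ℂ) : ‖1 - conj z * w‖ = ‖1 - conj w * z‖ := by
  rw [← Complex.norm_conj (1 - conj z * w)]
  simp [mul_comm]

lemma pseudoHyperbolicDist_comm (z w : ℂ) :
    pseudoHyperbolicDist z w = pseudoHyperbolicDist w z := by
  rw [pseudoHyperbolicDist, pseudoHyperbolicDist, norm_div, norm_div, norm_sub_rev,
    norm_one_sub_conj_mul_comm]

lemma one_sub_norm_mul_le_norm_one_sub_conj_mul (z w : ℂ) :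
    1 - ‖z‖ * ‖w‖ ≤ ‖1 - conj z * w‖ := by
  simpa using norm_sub_norm_le (1 : ℂ) (conj z * w)

lemma norm_one_sub_conj_mul_le {z : ℂ} (hz : ‖z‖ ≤ 1) (w : ℂ) :
    ‖1 - conj z * w‖ ≤ 2 * (1 - ‖z‖) + ‖z - w‖ := by
  have hsplit : 1 - conj z * w = (1 - (‖z‖ ^ 2 : ℝ)) + conj z * (z - w) := by
    push_cast; rw [← Complex.mul_conj']; ring
  calc ‖1 - conj z * w‖ ≤ ‖((1 - ‖z‖ ^ 2 : ℝ) : ℂ)‖ + ‖conj z * (z - w)‖ := by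
        rw [hsplit]; push_cast; exact norm_add_le _ _
    _ = (1 - ‖z‖ ^ 2) + ‖z‖ * ‖z - w‖ := by
        rw [Complex.norm_real, Real.norm_of_nonneg (by nlinarith [norm_nonneg z]), norm_mul,
          Complex.norm_conj]
    _ ≤ 2 * (1 - ‖z‖) + ‖z - w‖ := by nlinarith [norm_nonneg z, norm_nonneg (z - w)]

lemma normSq_one_sub_conj_mul_sub_normSq_sub (z w : ℂ) :
    Complex.normSq (1 - conj z * w) - Complex.normSq (z - w) =
      (1 - Complex.normSq z) * (1 - Complex.normSq w) := by
  simp only [Complex.normSq_apply, Complex.mul_re, Complex.mul_im, Complex.sub_re,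
    Complex.sub_im, Complex.one_re, Complex.one_im, Complex.conj_re, Complex.conj_im]
  ring

lemma pseudoHyperbolicDist_lt_one {z w : ℂ} (hz : ‖z‖ < 1) (hw : ‖w‖ < 1) :
    pseudoHyperbolicDist z w < 1 := by
  have hden : 0 < ‖1 - conj z * w‖ := by
    nlinarith [one_sub_norm_mul_le_norm_one_sub_conj_mul z w, norm_nonneg z, norm_nonneg w]
  rw [pseudoHyperbolicDist, norm_div, div_lt_one hden]
  have hdiff := normSq_one_sub_conj_mul_sub_normSq_sub z w
  simp only [Complex.normSq_eq_norm_sq] at hdiff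
  have : ‖z - w‖ ^ 2 < ‖1 - conj z * w‖ ^ 2 := by
    nlinarith [mul_pos (by nlinarith [norm_nonneg z] : 0 < 1 - ‖z‖ ^ 2)
      (by nlinarith [norm_nonneg w] : 0 < 1 - ‖w‖ ^ 2)]
  exact lt_of_pow_lt_pow_left₀ 2 hden.le this

lemma pseudoHyperbolicDist_le {z w : ℂ} (hz : ‖z‖ < 1) (hw : ‖w‖ ≤ 1) :
    pseudoHyperbolicDist z w ≤ ‖z - w‖ / (1 - ‖z‖) := by
  have hden : 1 - ‖z‖ ≤ ‖1 - conj z * w‖ := by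
    nlinarith [one_sub_norm_mul_le_norm_one_sub_conj_mul z w, norm_nonneg z]
  rw [pseudoHyperbolicDist, norm_div]
  exact div_le_div_of_nonneg_left (norm_nonneg _) (by linarith) hden

lemma norm_sub_mul_one_sub_pseudoHyperbolicDist_le {z w : ℂ} (hz : ‖z‖ < 1)
    (hw : ‖w‖ ≤ 1) :
    ‖z - w‖ * (1 - pseudoHyperbolicDist z w) ≤
      2 * pseudoHyperbolicDist z w * (1 - ‖z‖) := by
  have hden : 0 < ‖1 - conj z * w‖ := by
    nlinarith [one_sub_norm_mul_le_norm_one_sub_conj_mul z w, norm_nonneg z]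
  have hnum : ‖z - w‖ = pseudoHyperbolicDist z w * ‖1 - conj z * w‖ := by
    rw [pseudoHyperbolicDist, norm_div, div_mul_cancel₀ _ hden.ne']
  have hden_le := norm_one_sub_conj_mul_le hz.le w
  have hρ := pseudoHyperbolicDist_nonneg z w
  nlinarith

section ConvexCombination

variable {α : ℝ} {z w : ℂ}

lemma norm_sub_convex_left (hα : α ≤ 1) :
    ‖z - (α * z + (1 - α) * w)‖ = (1 - α) * ‖z - w‖ := by
  rw [show z - (α * z + (1 - α) * w) = ((1 - α : ℝ) : ℂ) * (z - w) by push_cast; ring,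
    norm_mul, Complex.norm_real, Real.norm_of_nonneg (by linarith)]

lemma norm_sub_convex_right (hα : 0 ≤ α) :
    ‖w - (α * z + (1 - α) * w)‖ = α * ‖z - w‖ := by
  rw [show w - (α * z + (1 - α) * w) = (α : ℂ) * (w - z) by ring,
    norm_mul, Complex.norm_real, Real.norm_of_nonneg hα, norm_sub_rev]

lemma norm_convex_le (hα : α ∈ Set.Icc 0 1) :
    ‖α * z + (1 - α) * w‖ ≤ α * ‖z‖ + (1 - α) * ‖w‖ := by
  calc ‖α * z + (1 - α) * w‖ ≤ ‖(α : ℂ) * z‖ + ‖((1 - α : ℝ) : ℂ) * w‖ := by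
        push_cast; exact norm_add_le _ _
    _ = α * ‖z‖ + (1 - α) * ‖w‖ := by
        rw [norm_mul, norm_mul, Complex.norm_real, Complex.norm_real,
          Real.norm_of_nonneg hα.1, Real.norm_of_nonneg (by linarith [hα.2])]

variable (hα : α ∈ Set.Icc 0 1) (hz : ‖z‖ < 1) (hw : ‖w‖ < 1)
include hα hz hw

lemma norm_convex_lt_one : ‖α * z + (1 - α) * w‖ < 1 := by
  have hm : max ‖z‖ ‖w‖ < 1 := max_lt hz hw
  nlinarith [norm_convex_le (z := z) (w := w) hα,
    mul_le_mul_of_nonneg_left (le_max_left ‖z‖ ‖w‖) hα.1,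
    mul_le_mul_of_nonneg_left (le_max_right ‖z‖ ‖w‖) (sub_nonneg.2 hα.2)]

lemma pseudoHyperbolicDist_convex_left_le :
    pseudoHyperbolicDist z (α * z + (1 - α) * w) ≤ ‖z - w‖ / (1 - ‖z‖) := by
  refine (pseudoHyperbolicDist_le hz (norm_convex_lt_one hα hz hw).le).trans ?_
  rw [norm_sub_convex_left hα.2]
  gcongr
  nlinarith [norm_nonneg (z - w), hα.1]

lemma pseudoHyperbolicDist_convex_right_le :
    pseudoHyperbolicDist w (α * z + (1 - α) * w) ≤ ‖z - w‖ / (1 - ‖z‖) := by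
  have hp := norm_convex_lt_one hα hz hw
  have hden : α * (1 - ‖z‖) ≤ 1 - ‖α * z + (1 - α) * w‖ := by
    nlinarith [norm_convex_le (z := z) (w := w) hα, hα.2]
  rw [pseudoHyperbolicDist_comm]
  refine (pseudoHyperbolicDist_le hp hw.le).trans ?_
  rw [norm_sub_rev, norm_sub_convex_right hα.1, div_le_div_iff₀ (by linarith) (by linarith)]
  nlinarith [norm_nonneg (z - w)]

lemma norm_sub_mul_le_of_convex :
    ‖z - w‖ * (1 - 2 * (pseudoHyperbolicDist z (α * z + (1 - α) * w) +
        pseudoHyperbolicDist w (α * z + (1 - α) * w))) ≤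
      2 * (pseudoHyperbolicDist z (α * z + (1 - α) * w) +
        pseudoHyperbolicDist w (α * z + (1 - α) * w)) * (1 - ‖z‖) := by
  set p := (α : ℂ) * z + (1 - α) * w
  have hp : ‖p‖ < 1 := norm_convex_lt_one hα hz hw
  have hzp := norm_sub_mul_one_sub_pseudoHyperbolicDist_le hz hp.le
  have hpw := norm_sub_mul_one_sub_pseudoHyperbolicDist_le hp hw.le
  rw [norm_sub_convex_left hα.2] at hzp
  rw [norm_sub_rev, norm_sub_convex_right hα.1, pseudoHyperbolicDist_comm] at hpw
  have hnorm : ‖z‖ - ‖p‖ ≤ (1 - α) * ‖z - w‖ := by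
    rw [← norm_sub_convex_left hα.2]; exact norm_sub_norm_le z p
  have hr₁ := pseudoHyperbolicDist_nonneg z p
  have hr₂ := pseudoHyperbolicDist_nonneg w p
  have hX := norm_nonneg (z - w)
  nlinarith [mul_le_mul_of_nonneg_left hnorm hr₂, mul_nonneg hX hr₁,
    mul_nonneg (mul_nonneg hX hα.1) hr₁, mul_nonneg (mul_nonneg hX hα.1) hr₂]

end ConvexCombination

lemma norm_div_one_sub_sub_one {z : ℂ} (hz : ‖z‖ < 1) (w : ℂ) :
    ‖(1 - w) / (1 - z) - 1‖ = ‖z - w‖ / ‖1 - z‖ := by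
  have hz1 : 1 - z ≠ 0 := by
    intro h
    rw [← eq_of_sub_eq_zero h, norm_one] at hz
    exact lt_irrefl 1 hz
  rw [← norm_div]
  congr 1
  field_simp
  ring

lemma le_log_one_add_div_one_sub {x : ℝ} (h0 : 0 ≤ x) (h1 : x < 1) :
    x ≤ Real.log ((1 + x) / (1 - x)) := by
  have hpos : 0 < (1 + x) / (1 - x) := div_pos (by linarith) (by linarith)
  refine le_trans ?_ (Real.one_sub_inv_le_log_of_pos hpos)
  rw [inv_div, le_sub_iff_add_le, ← le_sub_iff_add_le', div_le_iff₀ (by linarith)]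
  nlinarith

section Limits

variable {ι : Type*} {l : Filter ι}

lemma tendsto_half_log_one_add_div_one_sub_iff {ρ : ι → ℝ}
    (hρ : ∀ᶠ t in l, 0 ≤ ρ t ∧ ρ t < 1) :
    Tendsto (fun t => 1 / 2 * Real.log ((1 + ρ t) / (1 - ρ t))) l (𝓝 0) ↔
      Tendsto ρ l (𝓝 0) := by
  constructor
  · intro h
    refine tendsto_of_tendsto_of_tendsto_of_le_of_le' tendsto_const_nhds
      (by simpa using h.const_mul 2) (hρ.mono fun t ht => ht.1) ?_
    filter_upwards [hρ] with t ⟨h0, h1⟩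
    linarith [le_log_one_add_div_one_sub h0 h1]
  · intro h
    have hcont : ContinuousAt (fun x : ℝ => 1 / 2 * Real.log ((1 + x) / (1 - x))) 0 := by
      fun_prop (disch := norm_num)
    simpa [Function.comp_def] using hcont.tendsto.comp h

lemma tendsto_max_nhds_zero_iff {f g : ι → ℝ}
    (hf : ∀ᶠ t in l, 0 ≤ f t) (hg : ∀ᶠ t in l, 0 ≤ g t) :
    Tendsto (fun t => max (f t) (g t)) l (𝓝 0) ↔
      Tendsto f l (𝓝 0) ∧ Tendsto g l (𝓝 0) := by
  refine ⟨fun h => ⟨?_, ?_⟩, fun h => by simpa using h.1.max h.2⟩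
  · exact tendsto_of_tendsto_of_tendsto_of_le_of_le' tendsto_const_nhds h hf
      (Eventually.of_forall fun t => le_max_left _ _)
  · exact tendsto_of_tendsto_of_tendsto_of_le_of_le' tendsto_const_nhds h hg
      (Eventually.of_forall fun t => le_max_right _ _)

lemma tendsto_kd_nhds_zero_iff {u v : ι → ℂ × ℂ}
    (hu : ∀ᶠ t in l, u t ∈ bidisc) (hv : ∀ᶠ t in l, v t ∈ bidisc) :
    Tendsto (fun t => kd (u t) (v t)) l (𝓝 0) ↔
      Tendsto (fun t => pseudoHyperbolicDist (u t).1 (v t).1) l (𝓝 0) ∧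
        Tendsto (fun t => pseudoHyperbolicDist (u t).2 (v t).2) l (𝓝 0) := by
  have hρ₁ : ∀ᶠ t in l, 0 ≤ pseudoHyperbolicDist (u t).1 (v t).1 ∧
      pseudoHyperbolicDist (u t).1 (v t).1 < 1 := by
    filter_upwards [hu, hv] with t hut hvt
    exact ⟨pseudoHyperbolicDist_nonneg _ _, pseudoHyperbolicDist_lt_one hut.1 hvt.1⟩
  have hρ₂ : ∀ᶠ t in l, 0 ≤ pseudoHyperbolicDist (u t).2 (v t).2 ∧
      pseudoHyperbolicDist (u t).2 (v t).2 < 1 := by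
    filter_upwards [hu, hv] with t hut hvt
    exact ⟨pseudoHyperbolicDist_nonneg _ _, pseudoHyperbolicDist_lt_one hut.2 hvt.2⟩
  have half_log_nonneg {ρ : ℝ} (hρ : 0 ≤ ρ ∧ ρ < 1) :
      0 ≤ 1 / 2 * Real.log ((1 + ρ) / (1 - ρ)) := by
    linarith [le_log_one_add_div_one_sub hρ.1 hρ.2]
  simp only [kd, pd_eq_half_log]
  rw [tendsto_max_nhds_zero_iff (hρ₁.mono fun _ => half_log_nonneg)
      (hρ₂.mono fun _ => half_log_nonneg),
    tendsto_half_log_one_add_div_one_sub_iff hρ₁,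
    tendsto_half_log_one_add_div_one_sub_iff hρ₂]

lemma tendsto_kd_convex_retraction_iff {α : ℝ}
    (hα : α ∈ Set.Icc 0 1) {z w : ι → ℂ} (hz : ∀ᶠ t in l, ‖z t‖ < 1)
    (hw : ∀ᶠ t in l, ‖w t‖ < 1) :
    Tendsto (fun t => kd (z t, w t)
        (α * z t + (1 - α) * w t, α * z t + (1 - α) * w t)) l (𝓝 0) ↔
      Tendsto (fun t => ‖z t - w t‖ / (1 - ‖z t‖)) l (𝓝 0) := by
  have hp : ∀ᶠ t in l, ‖α * z t + (1 - α) * w t‖ < 1 := by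
    filter_upwards [hz, hw] with t hzt hwt
    exact norm_convex_lt_one hα hzt hwt
  have hgap_nonneg : ∀ᶠ t in l, 0 ≤ ‖z t - w t‖ / (1 - ‖z t‖) := by
    filter_upwards [hz] with t hzt
    exact div_nonneg (norm_nonneg _) (by linarith)
  rw [tendsto_kd_nhds_zero_iff (hz.and hw) (hp.and hp)]
  constructor
  · rintro ⟨h₁, h₂⟩
    have hs := h₁.add h₂
    rw [add_zero] at hs
    set s := fun t => pseudoHyperbolicDist (z t) (α * z t + (1 - α) * w t) +
      pseudoHyperbolicDist (w t) (α * z t + (1 - α) * w t)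
    have hbound : ∀ᶠ t in l, ‖z t - w t‖ / (1 - ‖z t‖) ≤ 2 * s t / (1 - 2 * s t) := by
      filter_upwards [hz, hw, hs.eventually (gt_mem_nhds (by norm_num : (0 : ℝ) < 1 / 2))]
        with t hzt hwt hst
      rw [div_le_div_iff₀ (by linarith) (by linarith)]
      linarith [norm_sub_mul_le_of_convex hα hzt hwt]
    have hlim : Tendsto (fun t => 2 * s t / (1 - 2 * s t)) l (𝓝 0) := by
      simpa [Pi.div_def] using
        (hs.const_mul 2).div (tendsto_const_nhds.sub (hs.const_mul 2)) (by norm_num)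
    exact tendsto_of_tendsto_of_tendsto_of_le_of_le' tendsto_const_nhds hlim
      hgap_nonneg hbound
  · intro h
    constructor
    · refine tendsto_of_tendsto_of_tendsto_of_le_of_le' tendsto_const_nhds h
        (Eventually.of_forall fun t => pseudoHyperbolicDist_nonneg _ _) ?_
      filter_upwards [hz, hw] with t hzt hwt
      exact pseudoHyperbolicDist_convex_left_le hα hzt hwt
    · refine tendsto_of_tendsto_of_tendsto_of_le_of_le' tendsto_const_nhds h
        (Eventually.of_forall fun t => pseudoHyperbolicDist_nonneg _ _) ?_
      filter_upwards [hz, hw] with t hzt hwt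
      exact pseudoHyperbolicDist_convex_right_le hα hzt hwt

lemma tendsto_div_one_sub_nhds_one_iff {z w : ι → ℂ}
    (hz : ∀ᶠ t in l, ‖z t‖ < 1)
    (hnt : ∃ M : ℝ, ∀ᶠ t in l, ‖1 - z t‖ ≤ M * (1 - ‖z t‖)) :
    Tendsto (fun t => ‖z t - w t‖ / (1 - ‖z t‖)) l (𝓝 0) ↔
      Tendsto (fun t => (1 - w t) / (1 - z t)) l (𝓝 1) := by
  obtain ⟨M, hM⟩ := hnt
  have hd (t : ι) : 1 - ‖z t‖ ≤ ‖1 - z t‖ := by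
    simpa using norm_sub_norm_le (1 : ℂ) (z t)
  refine Iff.trans ?_ tendsto_iff_norm_sub_tendsto_zero.symm
  constructor
  · intro h
    refine tendsto_of_tendsto_of_tendsto_of_le_of_le' tendsto_const_nhds h
      (Eventually.of_forall fun t => norm_nonneg _) ?_
    filter_upwards [hz] with t hzt
    rw [norm_div_one_sub_sub_one hzt]
    exact div_le_div_of_nonneg_left (norm_nonneg _) (by linarith) (hd t)
  · intro h
    refine tendsto_of_tendsto_of_tendsto_of_le_of_le' tendsto_const_nhds
      (by simpa using h.const_mul M) ?_ ?_
    · filter_upwards [hz] with t hzt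
      exact div_nonneg (norm_nonneg _) (by linarith)
    · filter_upwards [hz, hM] with t hzt hMt
      rw [norm_div_one_sub_sub_one hzt, div_le_iff₀ (by linarith), mul_div_assoc',
        div_mul_eq_mul_div, le_div_iff₀ (by linarith [hd t])]
      nlinarith [norm_nonneg (z t - w t)]

end Limits

lemma mul_conj_div_norm (b : ℂ) : b * (conj b / ‖b‖) = ‖b‖ := by
  rcases eq_or_ne b 0 with rfl | hb
  · simp
  rw [mul_div_assoc', Complex.mul_conj', div_eq_iff (by exact_mod_cast norm_ne_zero_iff.2 hb)]
  ring

lemma norm_conj_div_norm_le_one (b : ℂ) : ‖conj b / ‖b‖‖ ≤ 1 := by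
  rw [norm_div, Complex.norm_conj, Complex.norm_real, Real.norm_of_nonneg (norm_nonneg b)]
  exact div_self_le_one _

lemma norm_add_norm_le_one_of_mapsTo_disc {b c : ℂ}
    (h : ∀ z ∈ bidisc, ‖b * z.1 + c * z.2‖ < 1) : ‖b‖ + ‖c‖ ≤ 1 := by
  by_contra! hbc
  set r := 1 / (‖b‖ + ‖c‖)
  have hr : r < 1 := by rw [div_lt_one (by linarith)]; exact hbc
  have hr0 : 0 ≤ r := by positivity
  have hnorm : ∀ d : ℂ, ‖(r : ℂ) * (conj d / ‖d‖)‖ < 1 := fun d => by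
    rw [norm_mul, Complex.norm_real, Real.norm_of_nonneg hr0]
    nlinarith [norm_conj_div_norm_le_one d]
  have hval := h ((r : ℂ) * (conj b / ‖b‖), (r : ℂ) * (conj c / ‖c‖))
    ⟨hnorm b, hnorm c⟩
  rw [mul_left_comm b, mul_left_comm c, mul_conj_div_norm, mul_conj_div_norm, ← mul_add,
    ← Complex.ofReal_add, ← Complex.ofReal_mul, one_div_mul_cancel (by linarith),
    Complex.ofReal_one, norm_one] at hval
  exact lt_irrefl 1 hval

lemma exists_ofReal_mem_Icc_of_norm_add_norm_one_sub_le {a : ℂ}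
    (h : ‖a‖ + ‖1 - a‖ ≤ 1) :
    ∃ α ∈ Set.Icc (0 : ℝ) 1, a = α := by
  have h₁ : a.re ≤ ‖a‖ := Complex.re_le_norm a
  have h₂ : 1 - a.re ≤ ‖1 - a‖ := by simpa using Complex.re_le_norm (1 - a)
  have him : a.im = 0 := Complex.abs_re_eq_norm.1 (by
    rw [abs_of_nonneg (by linarith [norm_nonneg a])]; linarith [norm_nonneg (1 - a)])
  exact ⟨a.re, ⟨by linarith [norm_nonneg a], by linarith [norm_nonneg (1 - a)]⟩,
    Complex.ext (by simp) (by simp [him])⟩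

/-- for a linear retraction onto the diagonal geodesic of `Δ²`, a
restricted `(1,1)`-curve is special iff `(1-γ₂)/(1-γ₁) → 1`. -/
theorem special_iff_ratio_tendsto_one
    (a : ℂ) (γ : ℝ → ℂ × ℂ) (hγ : xcurve γ (1, 1))
    (hres : NTcurve (fun t => (γ t).1) 1)
    (hmaps : Set.MapsTo
      (fun z : ℂ × ℂ => (a * z.1 + (1 - a) * z.2, a * z.1 + (1 - a) * z.2)) bidisc bidisc) :
    Tendsto
        (fun t => kd (γ t)
          (a * (γ t).1 + (1 - a) * (γ t).2, a * (γ t).1 + (1 - a) * (γ t).2))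
        (nhdsWithin 1 (Set.Iio 1)) (nhds 0) ↔
      Tendsto (fun t => (1 - (γ t).2) / (1 - (γ t).1))
        (nhdsWithin 1 (Set.Iio 1)) (nhds 1) := by
  obtain ⟨α, hα, rfl⟩ := exists_ofReal_mem_Icc_of_norm_add_norm_one_sub_le
    (norm_add_norm_le_one_of_mapsTo_disc fun z hz => (hmaps hz).1)
  have hγ_mem : ∀ᶠ t in 𝓝[<] (1 : ℝ), γ t ∈ bidisc := by
    filter_upwards [Ioo_mem_nhdsLT zero_lt_one] with t ht
    exact hγ.2.1 t ⟨ht.1.le, ht.2⟩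
  have hγ₁ : ∀ᶠ t in 𝓝[<] (1 : ℝ), ‖(γ t).1‖ < 1 := hγ_mem.mono fun t ht => ht.1
  have hγ₂ : ∀ᶠ t in 𝓝[<] (1 : ℝ), ‖(γ t).2‖ < 1 := hγ_mem.mono fun t ht => ht.2
  exact (tendsto_kd_convex_retraction_iff hα hγ₁ hγ₂).trans
    (tendsto_div_one_sub_nhds_one_iff hγ₁ hres.2)
end

section
/- (Well-definedness of the φ_g-boundary dilation coefficient.) Let f ∈ Hol(Δ², Δ), x ∈ ∂Δ² with x₁ = 1, φ_g(z) = (z, g(z)) a complex geodesic through x, and θ ∈ Aut(Δ) with θ(1) = 1. Let ψ_g(z) = (θ(z), g(θ(z))) be the reparametrized geodesic. Then lim_{t→1⁻}[K_{Δ²}(0, φ_g(t)) − ω(0, f(φ_g(t)))] = lim_{t→1⁻}[K_{Δ²}(0, ψ_g(t)) − ω(0, f(ψ_g(t)))]; i.e., the coefficient λ_{φ_g}(f) defined by (1/2) log λ_{φ_g}(f) = lim_{t→1⁻}[K_{Δ²}(0, φ_g(t)) − ω(0, f(φ_g(t)))] is independent of the parametrization of the geodesic. -/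
open Filter Topology
open scoped ENNReal

/-!
Along the graph `z ↦ (z, g z)` the quantity `K(0, (z, g z)) - ω(0, f (z, g z))` is
`3`-Lipschitz for the Poincaré distance `ω`: by Schwarz–Pick, `K((z, g z), (w, g w)) = ω(z, w)`,
`f` contracts in each variable, and `|ω(0, u) - ω(0, v)| ≤ ω(u, v)`. Since `θ` fixes `1`, the
geodesic `θ((-1, 1))` is tangent to the real axis at `1`: `Im θ(t) = O((1 - t)²)` while
`1 - |θ(t)| ≥ c (1 - t)`. So `ω(θ(t), Re θ(t)) = O(1 - t)`, and as `Re θ(t) → 1⁻` the limit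
along `θ(t)` equals the limit `L` along the radius.
-/

open ComplexConjugate Filter Topology Set

theorem mem_disc {z : ℂ} : z ∈ disc ↔ ‖z‖ < 1 := Iff.rfl

theorem disc_eq_ball : disc = Metric.ball (0 : ℂ) 1 := by
  ext z
  simp [mem_disc]

theorem mem_disc_ofReal {t : ℝ} (ht : t ∈ Ioo (-1) 1) : (t : ℂ) ∈ disc := by
  rw [mem_disc, Complex.norm_real, Real.norm_eq_abs, abs_lt]
  exact ht

theorem ofReal_re_mem_disc {z : ℂ} (hz : z ∈ disc) : (z.re : ℂ) ∈ disc := by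
  rw [mem_disc, Complex.norm_real, Real.norm_eq_abs]
  exact (Complex.abs_re_le_norm z).trans_lt hz

theorem norm_one_sub_conj_mul_sq_sub_norm_sub_sq (z w : ℂ) :
    ‖1 - conj z * w‖ ^ 2 - ‖z - w‖ ^ 2 = (1 - ‖z‖ ^ 2) * (1 - ‖w‖ ^ 2) := by
  simp only [Complex.sq_norm, Complex.normSq_apply, Complex.sub_re, Complex.sub_im,
    Complex.mul_re, Complex.mul_im, Complex.one_re, Complex.one_im, Complex.conj_re,
    Complex.conj_im]
  ring

theorem one_sub_conj_mul_ne_zero {z w : ℂ} (hz : ‖z‖ < 1) (hw : ‖w‖ ≤ 1) :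
    1 - conj z * w ≠ 0 := by
  rw [sub_ne_zero, ne_comm]
  refine ne_of_apply_ne norm (ne_of_lt ?_)
  rw [norm_mul, Complex.norm_conj, norm_one]
  exact mul_lt_one_of_nonneg_of_lt_one_left (norm_nonneg _) hz hw

noncomputable def pseudoHypDist (z w : ℂ) : ℝ := ‖(z - w) / (1 - conj z * w)‖

theorem pseudoHypDist_nonneg (z w : ℂ) : 0 ≤ pseudoHypDist z w := norm_nonneg _

theorem pseudoHypDist_zero_left (w : ℂ) : pseudoHypDist 0 w = ‖w‖ := by
  simp [pseudoHypDist]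

theorem pseudoHypDist_comm (z w : ℂ) : pseudoHypDist z w = pseudoHypDist w z := by
  rw [pseudoHypDist, pseudoHypDist, norm_div, norm_div, norm_sub_rev,
    ← Complex.norm_conj (1 - conj z * w)]
  simp [mul_comm]

theorem pseudoHypDist_lt_one {z w : ℂ} (hz : z ∈ disc) (hw : w ∈ disc) :
    pseudoHypDist z w < 1 := by
  have hden := norm_pos_iff.mpr (one_sub_conj_mul_ne_zero hz hw.le)
  have key := norm_one_sub_conj_mul_sq_sub_norm_sub_sq z w
  have hpos : 0 < (1 - ‖z‖ ^ 2) * (1 - ‖w‖ ^ 2) := by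
    rw [mem_disc] at hz hw
    exact mul_pos (by nlinarith [norm_nonneg z]) (by nlinarith [norm_nonneg w])
  rw [pseudoHypDist, norm_div, div_lt_one hden]
  nlinarith [norm_nonneg (z - w)]

theorem pd_eq_artanh {z w : ℂ} (hz : z ∈ disc) (hw : w ∈ disc) :
    pd z w = Real.artanh (pseudoHypDist z w) := by
  rw [Real.artanh_eq_half_log ⟨by linarith [pseudoHypDist_nonneg z w],
    (pseudoHypDist_lt_one hz hw).le⟩]
  rfl

theorem pd_comm (z w : ℂ) : pd z w = pd w z := by
  simp only [pd]
  rw [← pseudoHypDist, ← pseudoHypDist, pseudoHypDist_comm]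

theorem Real.continuousOn_artanh : ContinuousOn Real.artanh (Ioo (-1) 1) := by
  unfold Real.artanh
  refine ContinuousOn.log (by fun_prop (disch := grind)) fun x hx => ?_
  exact (Real.sqrt_pos.2 (div_pos (by linarith [hx.1]) (by linarith [hx.2]))).ne'

theorem Real.artanh_sub_artanh {x y : ℝ} (hx : x ∈ Ioo (-1) 1) (hy : y ∈ Ioo (-1) 1) :
    Real.artanh x - Real.artanh y = Real.artanh ((x - y) / (1 - x * y)) := by
  obtain ⟨hx₀, hx₁⟩ := hx
  obtain ⟨hy₀, hy₁⟩ := hy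
  have hxy : 0 < 1 - x * y := by nlinarith
  have h_add : 1 + (x - y) / (1 - x * y) = (1 + x) * (1 - y) / (1 - x * y) := by
    field_simp; ring
  have h_sub : 1 - (x - y) / (1 - x * y) = (1 - x) * (1 + y) / (1 - x * y) := by
    field_simp; ring
  have h₁ : 0 < (1 + x) * (1 - y) / (1 - x * y) := by
    apply div_pos (mul_pos _ _) hxy <;> linarith
  have h₂ : 0 < (1 - x) * (1 + y) / (1 - x * y) := by
    apply div_pos (mul_pos _ _) hxy <;> linarith
  have h_mem : (x - y) / (1 - x * y) ∈ Icc (-1) 1 := by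
    constructor <;> linarith
  rw [Real.artanh_eq_half_log ⟨hx₀.le, hx₁.le⟩, Real.artanh_eq_half_log ⟨hy₀.le, hy₁.le⟩,
    Real.artanh_eq_half_log h_mem, ← mul_sub,
    ← Real.log_div (div_pos (by linarith) (by linarith)).ne'
      (div_pos (by linarith) (by linarith)).ne', h_add, h_sub]
  congr 2
  field_simp

theorem div_one_sub_mul_le_pseudoHypDist {u v : ℂ} (hu : u ∈ disc) (hv : v ∈ disc)
    (huv : ‖v‖ ≤ ‖u‖) : (‖u‖ - ‖v‖) / (1 - ‖u‖ * ‖v‖) ≤ pseudoHypDist u v := by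
  rw [mem_disc] at hu hv
  have hD := norm_pos_iff.mpr (one_sub_conj_mul_ne_zero hu hv.le)
  have hAB : 0 < 1 - ‖u‖ * ‖v‖ := by nlinarith [norm_nonneg v]
  have key := norm_one_sub_conj_mul_sq_sub_norm_sub_sq u v
  have hN : ‖u‖ - ‖v‖ ≤ ‖u - v‖ := norm_sub_norm_le u v
  rw [pseudoHypDist, norm_div, div_le_div_iff₀ hAB hD]
  -- with `x = ‖u‖ - ‖v‖`, `y = 1 - ‖u‖ ‖v‖`, `N = ‖u - v‖`, `D = ‖1 - conj u v‖` one has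
  -- `D² - N² = y² - x²`, whence `(N y)² - (x D)² = (N² - x²)(y² - x²) ≥ 0`.
  have hsq : ((‖u‖ - ‖v‖) * ‖1 - conj u * v‖) ^ 2 ≤ (‖u - v‖ * (1 - ‖u‖ * ‖v‖)) ^ 2 := by
    have hx : (‖u‖ - ‖v‖) ^ 2 ≤ ‖u - v‖ ^ 2 := pow_le_pow_left₀ (by linarith) hN 2
    have hy : (‖u‖ - ‖v‖) ^ 2 ≤ (1 - ‖u‖ * ‖v‖) ^ 2 := by
      nlinarith [mul_nonneg (mul_nonneg (sub_nonneg.2 hu.le) (sub_nonneg.2 hv.le))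
        (mul_nonneg (add_nonneg zero_le_one (norm_nonneg u))
          (add_nonneg zero_le_one (norm_nonneg v)))]
    nlinarith [mul_nonneg (sub_nonneg.mpr hx) (sub_nonneg.mpr hy)]
  exact (pow_le_pow_iff_left₀ (mul_nonneg (by linarith) hD.le)
    (mul_nonneg (norm_nonneg _) hAB.le) two_ne_zero).mp hsq

theorem pd_zero_sub_pd_zero_le {u v : ℂ} (hu : u ∈ disc) (hv : v ∈ disc) :
    pd 0 u - pd 0 v ≤ pd u v := by
  have h0 : (0 : ℂ) ∈ disc := by simp [mem_disc]
  rw [pd_eq_artanh h0 hu, pd_eq_artanh h0 hv, pd_eq_artanh hu hv, pseudoHypDist_zero_left,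
    pseudoHypDist_zero_left]
  have hu' : ‖u‖ ∈ Ioo (-1) 1 := ⟨by linarith [norm_nonneg u], hu⟩
  have hv' : ‖v‖ ∈ Ioo (-1) 1 := ⟨by linarith [norm_nonneg v], hv⟩
  rcases le_total ‖u‖ ‖v‖ with huv | hvu
  · have := (Real.artanh_le_artanh_iff hu' hv').mpr huv
    linarith [Real.artanh_nonneg (pseudoHypDist_nonneg u v)]
  · rw [Real.artanh_sub_artanh hu' hv']
    have hAB : 0 < 1 - ‖u‖ * ‖v‖ := by nlinarith [norm_nonneg v, hu'.2, hv'.2]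
    exact Real.artanh_le_artanh ((neg_one_lt_zero).trans_le (div_nonneg (sub_nonneg.2 hvu) hAB.le))
      (pseudoHypDist_lt_one hu hv) (div_one_sub_mul_le_pseudoHypDist hu hv hvu)

theorem abs_pd_zero_sub_pd_zero_le {u v : ℂ} (hu : u ∈ disc) (hv : v ∈ disc) :
    |pd 0 u - pd 0 v| ≤ pd u v :=
  abs_sub_le_iff.mpr
    ⟨pd_zero_sub_pd_zero_le hu hv, pd_comm u v ▸ pd_zero_sub_pd_zero_le hv hu⟩

noncomputable def mobius (c a z : ℂ) : ℂ := c * (z - a) / (1 - conj a * z)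

theorem norm_mobius {c : ℂ} (hc : ‖c‖ = 1) (a z : ℂ) :
    ‖mobius c a z‖ = pseudoHypDist a z := by
  rw [mobius, mul_div_assoc, norm_mul, hc, one_mul, pseudoHypDist, norm_div, norm_div,
    norm_sub_rev]

theorem mapsTo_mobius {c a : ℂ} (hc : ‖c‖ = 1) (ha : a ∈ disc) :
    MapsTo (mobius c a) disc disc := fun z hz => by
  rw [mem_disc, norm_mobius hc]
  exact pseudoHypDist_lt_one ha hz

theorem differentiableOn_mobius (c : ℂ) {a : ℂ} (ha : a ∈ disc) :
    DifferentiableOn ℂ (mobius c a) disc :=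
  DifferentiableOn.div (by fun_prop) (by fun_prop)
    fun _ hz => one_sub_conj_mul_ne_zero ha (mem_disc.mp hz).le

theorem mobius_neg_mobius {a z : ℂ} (ha : a ∈ disc) (hz : z ∈ disc) :
    mobius 1 (-a) (mobius 1 a z) = z := by
  have h₁ := one_sub_conj_mul_ne_zero ha (mem_disc.mp hz).le
  have h₂ := one_sub_conj_mul_ne_zero ha (mem_disc.mp ha).le
  have hnum : mobius 1 a z - -a = z * (1 - conj a * a) / (1 - conj a * z) := by
    rw [mobius, one_mul, sub_neg_eq_add, div_add' _ _ _ h₁]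
    ring
  have hden : 1 - conj (-a) * mobius 1 a z = (1 - conj a * a) / (1 - conj a * z) := by
    rw [mobius, one_mul, map_neg, neg_mul, sub_neg_eq_add, mul_div_assoc', one_add_div h₁]
    ring
  rw [mobius, one_mul, hnum, hden, div_div_div_cancel_right₀ h₁, mul_div_assoc, div_self h₂,
    mul_one]

theorem pseudoHypDist_le_of_mapsTo {u : ℂ → ℂ} (hd : DifferentiableOn ℂ u disc)
    (hm : MapsTo u disc disc) {z w : ℂ} (hz : z ∈ disc) (hw : w ∈ disc) :
    pseudoHypDist (u z) (u w) ≤ pseudoHypDist z w := by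
  set k : ℂ → ℂ := mobius 1 (u w) ∘ u ∘ mobius 1 (-w)
  have hw' : -w ∈ disc := by rwa [mem_disc, norm_neg]
  have hk_maps : MapsTo k disc disc :=
    (mapsTo_mobius norm_one (hm hw)).comp (hm.comp (mapsTo_mobius norm_one hw'))
  have hk_diff : DifferentiableOn ℂ k disc :=
    (differentiableOn_mobius 1 (hm hw)).comp
      (hd.comp (differentiableOn_mobius 1 hw') (mapsTo_mobius norm_one hw'))
      (hm.comp (mapsTo_mobius norm_one hw'))
  have hk0 : k 0 = 0 := by simp [k, mobius]
  have hschwarz : ‖k (mobius 1 w z)‖ ≤ ‖mobius 1 w z‖ :=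
    Complex.norm_le_norm_of_mapsTo_ball (by rwa [← disc_eq_ball])
      ((by rwa [← disc_eq_ball] : MapsTo k _ _).mono_right Metric.ball_subset_closedBall) hk0
      (mem_disc.mp (mapsTo_mobius norm_one hw hz))
  rwa [show k (mobius 1 w z) = mobius 1 (u w) (u z) by simp [k, mobius_neg_mobius hw hz],
    norm_mobius norm_one, norm_mobius norm_one, pseudoHypDist_comm, pseudoHypDist_comm w]
    at hschwarz

theorem pd_le_of_mapsTo {u : ℂ → ℂ} (hd : DifferentiableOn ℂ u disc)
    (hm : MapsTo u disc disc) {z w : ℂ} (hz : z ∈ disc) (hw : w ∈ disc) :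
    pd (u z) (u w) ≤ pd z w := by
  rw [pd_eq_artanh (hm hz) (hm hw), pd_eq_artanh hz hw]
  exact Real.artanh_le_artanh (by linarith [pseudoHypDist_nonneg (u z) (u w)])
    (pseudoHypDist_lt_one hz hw) (pseudoHypDist_le_of_mapsTo hd hm hz hw)

theorem abs_kd_zero_sub_kd_zero_le {p q : ℂ × ℂ} (hp : p ∈ bidisc) (hq : q ∈ bidisc) :
    |kd 0 p - kd 0 q| ≤ kd p q :=
  (abs_max_sub_max_le_max _ _ _ _).trans
    (max_le_max (abs_pd_zero_sub_pd_zero_le hp.1 hq.1) (abs_pd_zero_sub_pd_zero_le hp.2 hq.2))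

theorem abs_pd_zero_map_sub_le {f : ℂ × ℂ → ℂ} (hf : DifferentiableOn ℂ f bidisc)
    (hfm : MapsTo f bidisc disc) {p q : ℂ × ℂ} (hp : p ∈ bidisc) (hq : q ∈ bidisc) :
    |pd 0 (f p) - pd 0 (f q)| ≤ 2 * kd p q := by
  have hr : (q.1, p.2) ∈ bidisc := ⟨hq.1, hp.2⟩
  have h₁ : pd (f p) (f (q.1, p.2)) ≤ pd p.1 q.1 := by
    have hmaps : MapsTo (fun ζ => (ζ, p.2)) disc bidisc := fun ζ hζ => ⟨hζ, hp.2⟩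
    exact pd_le_of_mapsTo (u := fun ζ => f (ζ, p.2)) (hf.comp (by fun_prop) hmaps)
      (hfm.comp hmaps) hp.1 hq.1
  have h₂ : pd (f (q.1, p.2)) (f q) ≤ pd p.2 q.2 := by
    have hmaps : MapsTo (fun ζ => (q.1, ζ)) disc bidisc := fun ζ hζ => ⟨hq.1, hζ⟩
    exact pd_le_of_mapsTo (u := fun ζ => f (q.1, ζ)) (hf.comp (by fun_prop) hmaps)
      (hfm.comp hmaps) hp.2 hq.2
  calc |pd 0 (f p) - pd 0 (f q)|
      ≤ |pd 0 (f p) - pd 0 (f (q.1, p.2))| + |pd 0 (f (q.1, p.2)) - pd 0 (f q)| :=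
        abs_sub_le _ _ _
    _ ≤ pd p.1 q.1 + pd p.2 q.2 :=
        add_le_add ((abs_pd_zero_sub_pd_zero_le (hfm hp) (hfm hr)).trans h₁)
          ((abs_pd_zero_sub_pd_zero_le (hfm hr) (hfm hq)).trans h₂)
    _ ≤ 2 * kd p q := by
        rw [two_mul]
        exact add_le_add (le_max_left _ _) (le_max_right _ _)

/-- `K(0, p) - ω(0, f(p))`; its limit along a geodesic `φ` is `(1/2) log λ_φ(f)`. -/
noncomputable def dilationDefect (f : ℂ × ℂ → ℂ) (p : ℂ × ℂ) : ℝ := kd 0 p - pd 0 (f p)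

theorem abs_dilationDefect_sub_le {f : ℂ × ℂ → ℂ} (hf : DifferentiableOn ℂ f bidisc)
    (hfm : MapsTo f bidisc disc) {p q : ℂ × ℂ} (hp : p ∈ bidisc) (hq : q ∈ bidisc) :
    |dilationDefect f p - dilationDefect f q| ≤ 3 * kd p q := by
  have h₁ := abs_kd_zero_sub_kd_zero_le hp hq
  have h₂ := abs_pd_zero_map_sub_le hf hfm hp hq
  calc |dilationDefect f p - dilationDefect f q|
      = |(kd 0 p - kd 0 q) - (pd 0 (f p) - pd 0 (f q))| := by
        rw [dilationDefect, dilationDefect]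
        ring_nf
    _ ≤ |kd 0 p - kd 0 q| + |pd 0 (f p) - pd 0 (f q)| := abs_sub _ _
    _ ≤ 3 * kd p q := by linarith

theorem tendsto_dilationDefect_of_tendsto_kd {α : Type*} {l : Filter α} {f : ℂ × ℂ → ℂ}
    (hf : DifferentiableOn ℂ f bidisc) (hfm : MapsTo f bidisc disc) {u v : α → ℂ × ℂ}
    (hu : ∀ᶠ t in l, u t ∈ bidisc) (hv : ∀ᶠ t in l, v t ∈ bidisc)
    (huv : Tendsto (fun t => kd (u t) (v t)) l (𝓝 0)) {L : ℝ}
    (hL : Tendsto (fun t => dilationDefect f (v t)) l (𝓝 L)) :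
    Tendsto (fun t => dilationDefect f (u t)) l (𝓝 L) := by
  have hdiff : Tendsto (fun t => dilationDefect f (u t) - dilationDefect f (v t)) l (𝓝 0) :=
    squeeze_zero_norm' (by
        filter_upwards [hu, hv] with t hut hvt
        exact abs_dilationDefect_sub_le hf hfm hut hvt)
      (by simpa using huv.const_mul 3)
  simpa using hdiff.add hL

theorem kd_graph {g : ℂ → ℂ} (hg : DifferentiableOn ℂ g disc) (hgm : MapsTo g disc disc)
    {z w : ℂ} (hz : z ∈ disc) (hw : w ∈ disc) : kd (z, g z) (w, g w) = pd z w :=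
  max_eq_left (pd_le_of_mapsTo hg hgm hz hw)

theorem pseudoHypDist_re_le {z : ℂ} (hz : z ∈ disc) :
    pseudoHypDist z z.re ≤ |z.im| / (1 - ‖z‖) := by
  have hz_re : ‖(z.re : ℂ)‖ ≤ 1 := (mem_disc.mp (ofReal_re_mem_disc hz)).le
  have hnum : ‖z - z.re‖ = |z.im| := by
    rw [show z - z.re = z.im * Complex.I by linear_combination -Complex.re_add_im z, norm_mul,
      Complex.norm_I, mul_one, Complex.norm_real, Real.norm_eq_abs]
  have hden : 1 - ‖z‖ ≤ ‖1 - conj z * z.re‖ := by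
    have : ‖conj z * z.re‖ ≤ ‖z‖ := by
      rw [norm_mul, Complex.norm_conj]
      exact mul_le_of_le_one_right (norm_nonneg z) hz_re
    linarith [norm_sub_norm_le (1 : ℂ) (conj z * z.re), norm_one (α := ℂ)]
  rw [pseudoHypDist, norm_div, hnum]
  exact div_le_div_of_nonneg_left (abs_nonneg _) (by linarith [mem_disc.mp hz]) hden

theorem one_sub_norm_sq_mobius {c a z : ℂ} (hc : ‖c‖ = 1) (ha : a ∈ disc) (hz : ‖z‖ ≤ 1) :
    1 - ‖mobius c a z‖ ^ 2 = (1 - ‖a‖ ^ 2) * (1 - ‖z‖ ^ 2) / ‖1 - conj a * z‖ ^ 2 := by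
  have hD := norm_pos_iff.mpr (one_sub_conj_mul_ne_zero ha hz)
  rw [norm_mobius hc, pseudoHypDist, norm_div, ← norm_one_sub_conj_mul_sq_sub_norm_sub_sq,
    div_pow, one_sub_div (pow_pos hD 2).ne', norm_sub_rev]

theorem mul_one_sub_le_one_sub_norm_mobius {c a : ℂ} (hc : ‖c‖ = 1) (ha : a ∈ disc) {t : ℝ}
    (ht : t ∈ Ico 0 1) : (1 - ‖a‖) * (1 - t) / 4 ≤ 1 - ‖mobius c a t‖ := by
  obtain ⟨ht₀, ht₁⟩ := ht
  have hA := mem_disc.mp ha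
  have hA₀ := norm_nonneg a
  have ht_norm : ‖(t : ℂ)‖ = t := by rw [Complex.norm_real, Real.norm_of_nonneg ht₀]
  have hD := norm_pos_iff.mpr (one_sub_conj_mul_ne_zero ha (ht_norm.trans_le ht₁.le))
  have hD_le : ‖1 - conj a * t‖ ≤ 1 + ‖a‖ := by
    refine (norm_sub_le _ _).trans ?_
    rw [norm_one, norm_mul, Complex.norm_conj, ht_norm]
    nlinarith
  have hm := mem_disc.mp (mapsTo_mobius hc ha (mem_disc_ofReal ⟨by linarith, ht₁⟩))
  have key := one_sub_norm_sq_mobius hc ha (ht_norm.trans_le ht₁.le)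
  rw [ht_norm] at key
  -- With `m = ‖mobius c a t‖`: `1 - m ≥ (1 - m²) / 2` and
  -- `(1 - ‖a‖²) / ‖1 - conj a t‖² ≥ (1 - ‖a‖) / (1 + ‖a‖)`.
  have hfrac : (1 - ‖a‖) * (1 - t) / 2 ≤ (1 - ‖a‖ ^ 2) * (1 - t ^ 2) / ‖1 - conj a * t‖ ^ 2 := by
    rw [le_div_iff₀ (by positivity)]
    have : ‖1 - conj a * t‖ ^ 2 ≤ (1 + ‖a‖) ^ 2 := pow_le_pow_left₀ hD.le hD_le 2
    have h₁ : 0 ≤ (1 - ‖a‖) * (1 - t) := mul_nonneg (by linarith) (by linarith)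
    nlinarith [mul_le_mul_of_nonneg_left this h₁,
      mul_nonneg (mul_nonneg h₁ (by linarith : (0:ℝ) ≤ 1 + ‖a‖))
        (by linarith : (0:ℝ) ≤ (1 + t) - (1 + ‖a‖) / 2)]
  nlinarith [norm_nonneg (mobius c a t)]

theorem mobius_sub_one {c a z : ℂ} (ha : a ∈ disc) (h1 : mobius c a 1 = 1)
    (hz : 1 - conj a * z ≠ 0) :
    mobius c a z - 1 = (z - 1) * (1 - conj a * a) / ((1 - a) * (1 - conj a * z)) := by
  have h₁ : 1 - conj a * 1 ≠ 0 := one_sub_conj_mul_ne_zero ha norm_one.le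
  have hca : c * (1 - a) = 1 - conj a * 1 := (div_eq_one_iff_eq h₁).mp h1
  have h₂ : 1 - a ≠ 0 :=
    sub_ne_zero.2 fun h => by rw [← h, mem_disc, norm_one] at ha; exact lt_irrefl _ ha
  rw [mobius, div_sub_one hz, div_eq_div_iff hz (mul_ne_zero h₂ hz)]
  linear_combination (z - a) * (1 - conj a * z) * hca

theorem im_mobius_ofReal {c a : ℂ} (ha : a ∈ disc) (h1 : mobius c a 1 = 1) {t : ℝ}
    (ht : 1 - conj a * t ≠ 0) :
    (mobius c a t).im =
      -((1 - t) ^ 2 * (1 - ‖a‖ ^ 2) * a.im) / Complex.normSq ((1 - a) * (1 - conj a * t)) := by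
  have hnum : ((t : ℂ) - 1) * (1 - conj a * a) = ((t - 1) * (1 - ‖a‖ ^ 2) : ℝ) := by
    rw [mul_comm (conj a), Complex.mul_conj, Complex.normSq_eq_norm_sq]
    push_cast
    ring
  have hden_im : ((1 - a) * (1 - conj a * t)).im = (t - 1) * a.im := by
    simp only [Complex.mul_im, Complex.sub_re, Complex.sub_im, Complex.one_re, Complex.one_im,
      Complex.mul_re, Complex.conj_re, Complex.conj_im, Complex.ofReal_re, Complex.ofReal_im]
    ring
  have h := congrArg Complex.im (mobius_sub_one ha h1 ht)
  rw [Complex.sub_im, Complex.one_im, sub_zero] at h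
  rw [h, hnum, Complex.div_im, hden_im, Complex.ofReal_im, Complex.ofReal_re]
  ring

/-- The geodesic `θ((-1, 1))` ends orthogonally to `∂Δ` at `θ(1) = 1`, hence tangentially
to the real axis. -/
theorem abs_im_mobius_ofReal_le {c a : ℂ} (ha : a ∈ disc) (h1 : mobius c a 1 = 1) {t : ℝ}
    (ht : |t| ≤ 1) : |(mobius c a t).im| ≤ (1 - t) ^ 2 / (1 - ‖a‖) ^ 4 := by
  have hA : 0 < 1 - ‖a‖ := sub_pos.2 (mem_disc.mp ha)
  have ht' : ‖(t : ℂ)‖ ≤ 1 := by rwa [Complex.norm_real, Real.norm_eq_abs]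
  have hD := one_sub_conj_mul_ne_zero ha ht'
  have h₁ : 1 - ‖a‖ ≤ ‖1 - a‖ := by simpa using norm_sub_norm_le (1 : ℂ) a
  have h₂ : 1 - ‖a‖ ≤ ‖1 - conj a * t‖ := by
    have : ‖conj a * t‖ ≤ ‖a‖ := by
      rw [norm_mul, Complex.norm_conj]
      exact mul_le_of_le_one_right (norm_nonneg a) ht'
    linarith [norm_sub_norm_le (1 : ℂ) (conj a * t), norm_one (α := ℂ)]
  have hN : (1 - ‖a‖) ^ 4 ≤ Complex.normSq ((1 - a) * (1 - conj a * t)) := by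
    rw [Complex.normSq_eq_norm_sq, norm_mul, mul_pow, show (4 : ℕ) = 2 + 2 from rfl, pow_add]
    exact mul_le_mul (pow_le_pow_left₀ hA.le h₁ 2) (pow_le_pow_left₀ hA.le h₂ 2)
      (by positivity) (by positivity)
  have hcoef : |(1 - ‖a‖ ^ 2) * a.im| ≤ 1 := by
    have := Complex.abs_im_le_norm a
    rw [abs_mul, abs_of_nonneg (by nlinarith [norm_nonneg a] : (0 : ℝ) ≤ 1 - ‖a‖ ^ 2)]
    nlinarith [norm_nonneg a, abs_nonneg a.im]
  rw [im_mobius_ofReal ha h1 hD, abs_div, abs_neg, abs_of_pos (hN.trans_lt' (by positivity)),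
    mul_assoc, abs_mul, abs_of_nonneg (sq_nonneg _)]
  exact div_le_div₀ (sq_nonneg _) (mul_le_of_le_one_right (sq_nonneg _) hcoef) (by positivity) hN

theorem pseudoHypDist_mobius_re_le {c a : ℂ} (hc : ‖c‖ = 1) (ha : a ∈ disc)
    (h1 : mobius c a 1 = 1) {t : ℝ} (ht : t ∈ Ico 0 1) :
    pseudoHypDist (mobius c a t) (mobius c a t).re ≤ 4 / (1 - ‖a‖) ^ 5 * (1 - t) := by
  have hA : 0 < 1 - ‖a‖ := sub_pos.2 (mem_disc.mp ha)
  have ht₁ : 0 < 1 - t := sub_pos.2 ht.2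
  have hm := mapsTo_mobius hc ha (mem_disc_ofReal ⟨by linarith [ht.1], ht.2⟩)
  calc pseudoHypDist (mobius c a t) (mobius c a t).re
      ≤ |(mobius c a t).im| / (1 - ‖mobius c a t‖) := pseudoHypDist_re_le hm
    _ ≤ ((1 - t) ^ 2 / (1 - ‖a‖) ^ 4) / ((1 - ‖a‖) * (1 - t) / 4) :=
        div_le_div₀ (by positivity)
          (abs_im_mobius_ofReal_le ha h1 (abs_le.2 ⟨by linarith [ht.1], ht.2.le⟩))
          (by positivity) (mul_one_sub_le_one_sub_norm_mobius hc ha ht)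
    _ = 4 / (1 - ‖a‖) ^ 5 * (1 - t) := by
        field_simp

theorem eventually_mobius_mem_disc {c a : ℂ} (hc : ‖c‖ = 1) (ha : a ∈ disc) :
    ∀ᶠ t : ℝ in 𝓝[<] 1, mobius c a t ∈ disc := by
  filter_upwards [Ioo_mem_nhdsLT (show (-1 : ℝ) < 1 by norm_num)] with t ht
  exact mapsTo_mobius hc ha (mem_disc_ofReal ht)

theorem tendsto_pd_mobius_re {c a : ℂ} (hc : ‖c‖ = 1) (ha : a ∈ disc)
    (h1 : mobius c a 1 = 1) :
    Tendsto (fun t : ℝ => pd (mobius c a t) (mobius c a t).re) (𝓝[<] 1) (𝓝 0) := by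
  have hρ : Tendsto (fun t : ℝ => pseudoHypDist (mobius c a t) (mobius c a t).re)
      (𝓝[<] 1) (𝓝 0) := by
    refine squeeze_zero' (Eventually.of_forall fun t => pseudoHypDist_nonneg _ _) ?_ ?_
      (g := fun t : ℝ => 4 / (1 - ‖a‖) ^ 5 * (1 - t))
    · filter_upwards [Ico_mem_nhdsLT (show (0 : ℝ) < 1 by norm_num)] with t ht
      exact pseudoHypDist_mobius_re_le hc ha h1 ht
    · have hcont : Continuous fun t : ℝ => 4 / (1 - ‖a‖) ^ 5 * (1 - t) := by fun_prop
      simpa using (hcont.tendsto 1).mono_left nhdsWithin_le_nhds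
  have hartanh := (Real.artanh_zero ▸ (Real.continuousOn_artanh.continuousAt
    (Ioo_mem_nhds (by norm_num) (by norm_num))).tendsto).comp hρ
  refine hartanh.congr' ?_
  filter_upwards [eventually_mobius_mem_disc hc ha] with t ht
  exact (pd_eq_artanh ht (ofReal_re_mem_disc ht)).symm

theorem tendsto_re_mobius {c a : ℂ} (hc : ‖c‖ = 1) (ha : a ∈ disc) (h1 : mobius c a 1 = 1) :
    Tendsto (fun t : ℝ => (mobius c a t).re) (𝓝[<] 1) (𝓝[<] 1) := by
  have hcont : ContinuousAt (fun t : ℝ => mobius c a t) 1 :=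
    ContinuousAt.div (by fun_prop) (by fun_prop)
      (by simpa using one_sub_conj_mul_ne_zero ha norm_one.le)
  refine tendsto_nhdsWithin_iff.2 ⟨?_, ?_⟩
  · have := (Complex.continuous_re.tendsto _).comp hcont.tendsto
    simp only [Complex.ofReal_one, h1, Complex.one_re] at this
    exact this.mono_left nhdsWithin_le_nhds
  · filter_upwards [eventually_mobius_mem_disc hc ha] with t ht
    exact (Complex.re_le_norm _).trans_lt ht

theorem lamPhi_parametrization_independent_general
    (f : ℂ × ℂ → ℂ) (hf : DifferentiableOn ℂ f bidisc) (hfm : Set.MapsTo f bidisc disc)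
    (g : ℂ → ℂ) (hg : DifferentiableOn ℂ g disc) (hgm : Set.MapsTo g disc disc)
    (b : ℝ) (a : ℂ) (ha : ‖a‖ < 1)
    (θ : ℂ → ℂ)
    (hθ : ∀ z : ℂ, θ z = Complex.exp (b * Complex.I) * (z - a) / (1 - (starRingEnd ℂ) a * z))
    (hθ1 : θ 1 = 1)
    (L : ℝ)
    (hL : Tendsto (fun t : ℝ => kd 0 ((t : ℂ), g (t : ℂ)) - pd 0 (f ((t : ℂ), g (t : ℂ))))
      (nhdsWithin 1 (Set.Iio 1)) (nhds L)) :
    Tendsto (fun t : ℝ => kd 0 (θ (t : ℂ), g (θ (t : ℂ))) - pd 0 (f (θ (t : ℂ), g (θ (t : ℂ)))))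
      (nhdsWithin 1 (Set.Iio 1)) (nhds L) := by
  set c := Complex.exp (b * Complex.I)
  have hc : ‖c‖ = 1 := Complex.norm_exp_ofReal_mul_I b
  obtain rfl : θ = mobius c a := funext hθ
  have hθ_disc := eventually_mobius_mem_disc hc ha
  refine tendsto_dilationDefect_of_tendsto_kd hf hfm
    (v := fun t : ℝ => (((mobius c a t).re : ℂ), g (mobius c a t).re)) ?_ ?_ ?_
    (hL.comp (tendsto_re_mobius hc ha hθ1))
  · filter_upwards [hθ_disc] with t ht using ⟨ht, hgm ht⟩
  · filter_upwards [hθ_disc] with t ht using ⟨ofReal_re_mem_disc ht, hgm (ofReal_re_mem_disc ht)⟩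
  · refine (tendsto_pd_mobius_re hc ha hθ1).congr' ?_
    filter_upwards [hθ_disc] with t ht
    exact (kd_graph hg hgm ht (ofReal_re_mem_disc ht)).symm

/-- the `φ_g`-boundary dilation coefficient of `f` does not depend
on the parametrization of the geodesic: reparametrizing by a boundary-fixing
automorphism `θ` of `Δ` gives the same limit. -/
theorem lamPhi_parametrization_independent
    (f : ℂ × ℂ → ℂ) (hf : DifferentiableOn ℂ f bidisc) (hfm : Set.MapsTo f bidisc disc)
    (g : ℂ → ℂ) (hg : DifferentiableOn ℂ g disc) (hgm : Set.MapsTo g disc disc)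
    (hNT : NTlim g 1 1)
    (b : ℝ) (a : ℂ) (ha : ‖a‖ < 1)
    (θ : ℂ → ℂ)
    (hθ : ∀ z : ℂ, θ z = Complex.exp (b * Complex.I) * (z - a) / (1 - (starRingEnd ℂ) a * z))
    (hθ1 : θ 1 = 1)
    (L : ℝ)
    (hL : Tendsto (fun t : ℝ => kd 0 ((t : ℂ), g (t : ℂ)) - pd 0 (f ((t : ℂ), g (t : ℂ))))
      (nhdsWithin 1 (Set.Iio 1)) (nhds L)) :
    Tendsto (fun t : ℝ => kd 0 (θ (t : ℂ), g (θ (t : ℂ))) - pd 0 (f (θ (t : ℂ), g (θ (t : ℂ)))))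
      (nhdsWithin 1 (Set.Iio 1)) (nhds L) :=
  lamPhi_parametrization_independent_general f hf hfm g hg hgm b a ha θ hθ hθ1 L hL
end
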